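/- Let E ⊂ ℝ^d be a nonempty compact set with 0 < |E| < 1 (|E| denoting the diameter of E), let m be an integer with 1 ≤ m ≤ d, and let t, ε > 0 satisfy t + ε < m. Let 0 < θ₁ < θ < 1 and 0 < r < 1 be such that |E| < r^{θ₁}. Suppose μ is a Borel probability measure supported on E and c > 0 is a constant such that μ(B(x,u)) ≤ c·u^{t+ε} for every x ∈ ℝ^d and every u ∈ [r, r^{θ₁}]. Then ∬ φ_{r,θ}^{t,m}(x−y) dμ(y) dμ(x) ≤ C·r^t, where C = 3·max{ c + c·t/ε , |E|^{−m} + c·m/(m−(t+ε)) }. -/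

import Mathlib

open MeasureTheory Metric Set Filter Topology
open scoped ENNReal BigOperators

noncomputable section

/-- `S^s_{r,θ}(E)`: the infimum of `Σ_i |U_i|^s` over covers of `E` by sets `U_i`
with `r ≤ diam (U i) ≤ r ^ θ`.  (Any infinite such cover has infinite sum since each
term is at least `r ^ s > 0`, so it suffices to take the infimum over finite covers.) -/
def covSum (d : ℕ) (E : Set (EuclideanSpace ℝ (Fin d))) (θ r s : ℝ) : ℝ≥0∞ :=
  ⨅ (n : ℕ) (U : Fin n → Set (EuclideanSpace ℝ (Fin d))) (_ : E ⊆ ⋃ i, U i)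
    (_ : ∀ i, r ≤ diam (U i) ∧ diam (U i) ≤ r ^ θ),
    ∑ i, ENNReal.ofReal (diam (U i) ^ s)

/-- The function `r ↦ log S^s_{r,θ}(E) / (− log r)`. -/
def covRatio (d : ℕ) (E : Set (EuclideanSpace ℝ (Fin d))) (θ s r : ℝ) : ℝ :=
  Real.log (covSum d E θ r s).toReal / (- Real.log r)

/-- The lower `θ`-intermediate dimension: the unique `s ∈ [0,d]` with
`liminf_{r→0⁺} log S^s_{r,θ}(E)/(−log r) = 0`. -/
def lowerInterDim (d : ℕ) (θ : ℝ) (E : Set (EuclideanSpace ℝ (Fin d))) : ℝ :=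
  Classical.epsilon fun s : ℝ =>
    s ∈ Icc (0 : ℝ) d ∧ liminf (covRatio d E θ s) (𝓝[>] (0 : ℝ)) = 0

/-- The upper `θ`-intermediate dimension: the unique `s ∈ [0,d]` with
`limsup_{r→0⁺} log S^s_{r,θ}(E)/(−log r) = 0`. -/
def upperInterDim (d : ℕ) (θ : ℝ) (E : Set (EuclideanSpace ℝ (Fin d))) : ℝ :=
  Classical.epsilon fun s : ℝ =>
    s ∈ Icc (0 : ℝ) d ∧ limsup (covRatio d E θ s) (𝓝[>] (0 : ℝ)) = 0

/-- The lower quasi-Hausdorff dimension `lim_{θ→0⁺} dim_θ E`. -/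
def lowerQH (d : ℕ) (E : Set (EuclideanSpace ℝ (Fin d))) : ℝ :=
  Classical.epsilon fun L : ℝ =>
    Tendsto (fun θ => lowerInterDim d θ E) (𝓝[>] (0 : ℝ)) (𝓝 L)

/-- The upper quasi-Hausdorff dimension `lim_{θ→0⁺} dim̄_θ E`. -/
def upperQH (d : ℕ) (E : Set (EuclideanSpace ℝ (Fin d))) : ℝ :=
  Classical.epsilon fun L : ℝ =>
    Tendsto (fun θ => upperInterDim d θ E) (𝓝[>] (0 : ℝ)) (𝓝 L)

/-- The kernel `φ_{r,θ}^{s,t}`. -/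
def kerPhi (d : ℕ) (r θ s t : ℝ) (x : EuclideanSpace ℝ (Fin d)) : ℝ :=
  if ‖x‖ < r then 1
  else if ‖x‖ ≤ r ^ θ then (r / ‖x‖) ^ s
  else r ^ (θ * (t - s) + s) / ‖x‖ ^ t

/-- The capacity `C_{r,θ}^{s,t}(E)`: the reciprocal of the infimum over Borel probability
measures supported on `E` of the double integral of `φ_{r,θ}^{s,t}(x−y)`. -/
def capacity (d : ℕ) (E : Set (EuclideanSpace ℝ (Fin d))) (θ r s t : ℝ) : ℝ :=
  (sInf { I : ℝ | ∃ μ : Measure (EuclideanSpace ℝ (Fin d)),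
      IsProbabilityMeasure μ ∧ μ Eᶜ = 0 ∧
      I = ∫ x, ∫ y, kerPhi d r θ s t (x - y) ∂μ ∂μ })⁻¹

/-- The function `r ↦ log C_{r,θ}^{s,t}(E) / (− log r)`. -/
def capRatio (d : ℕ) (E : Set (EuclideanSpace ℝ (Fin d))) (θ s t r : ℝ) : ℝ :=
  Real.log (capacity d E θ r s t) / (- Real.log r)

/-- The lower `θ`-intermediate dimension profile `dim_θ^t E`: the unique `s ∈ [0,t]`
with `liminf_{r→0⁺} log C_{r,θ}^{s,t}(E)/(−log r) = s`. -/
def lowerProfile (d : ℕ) (θ t : ℝ) (E : Set (EuclideanSpace ℝ (Fin d))) : ℝ :=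
  Classical.epsilon fun s : ℝ =>
    s ∈ Icc (0 : ℝ) t ∧ liminf (capRatio d E θ s t) (𝓝[>] (0 : ℝ)) = s

/-- The upper `θ`-intermediate dimension profile `dim̄_θ^t E`: the unique `s ∈ [0,t]`
with `limsup_{r→0⁺} log C_{r,θ}^{s,t}(E)/(−log r) = s`. -/
def upperProfile (d : ℕ) (θ t : ℝ) (E : Set (EuclideanSpace ℝ (Fin d))) : ℝ :=
  Classical.epsilon fun s : ℝ =>
    s ∈ Icc (0 : ℝ) t ∧ limsup (capRatio d E θ s t) (𝓝[>] (0 : ℝ)) = s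

/-- `N_r(A)`: the smallest number of sets of diameter at most `r` needed to cover `A`. -/
def coverNumber (d : ℕ) (A : Set (EuclideanSpace ℝ (Fin d))) (r : ℝ) : ℝ≥0∞ :=
  ⨅ (n : ℕ) (U : Fin n → Set (EuclideanSpace ℝ (Fin d))) (_ : A ⊆ ⋃ i, U i)
    (_ : ∀ i, diam (U i) ≤ r), (n : ℝ≥0∞)

/-- The lower box dimension `liminf_{r→0⁺} log N_r(E)/(−log r)`. -/
def lowerBoxDim (d : ℕ) (E : Set (EuclideanSpace ℝ (Fin d))) : ℝ :=
  liminf (fun r : ℝ => Real.log ((coverNumber d E r).toReal) / (- Real.log r)) (𝓝[>] (0 : ℝ))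

/-- The upper box dimension `limsup_{r→0⁺} log N_r(E)/(−log r)`. -/
def upperBoxDim (d : ℕ) (E : Set (EuclideanSpace ℝ (Fin d))) : ℝ :=
  limsup (fun r : ℝ => Real.log ((coverNumber d E r).toReal) / (- Real.log r)) (𝓝[>] (0 : ℝ))

/-- The Assouad dimension. -/
def assouadDim (d : ℕ) (E : Set (EuclideanSpace ℝ (Fin d))) : ℝ :=
  sInf { s : ℝ | 0 ≤ s ∧ ∃ C : ℝ, 0 < C ∧ ∀ x ∈ E, ∀ r R : ℝ, 0 < r → r < R →
    coverNumber d (ball x R ∩ E) r ≤ ENNReal.ofReal (C * (R / r) ^ s) }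

/-- The upper Assouad spectrum `dim_A^α E`. -/
def assouadSpectrum (d : ℕ) (α : ℝ) (E : Set (EuclideanSpace ℝ (Fin d))) : ℝ :=
  sInf { t : ℝ | 0 ≤ t ∧ ∃ C : ℝ, 0 < C ∧ ∀ x ∈ E, ∀ r R : ℝ,
    0 < r → r ≤ R ^ (1 / α) → R ^ (1 / α) < R → R < 1 →
    coverNumber d (ball x R ∩ E) r ≤ ENNReal.ofReal (C * (R / r) ^ t) }

/-- The quasi-Assouad dimension `lim_{α→1⁻} dim_A^α E`. -/
def quasiAssouad (d : ℕ) (E : Set (EuclideanSpace ℝ (Fin d))) : ℝ :=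
  Classical.epsilon fun L : ℝ =>
    Tendsto (fun α => assouadSpectrum d α E) (𝓝[<] (1 : ℝ)) (𝓝 L)


/-! The kernel is radial, `φ(z) = g(‖z‖)`, with a nonincreasing profile `g`, so by
the layer-cake formula `∫ φ(x - y) dμ(y) = ∫₀^∞ μ {y | l < φ(x - y)} dl`, and the superlevel set
at level `l` lies in the ball `B(x, R)` as soon as `g R ≤ l`. Levels below
`l₀ = g(|E|) ≤ |E|^{-m} r^t` contribute at most `l₀`. For levels between `l₀` and
`l₁ = g(r^θ) = r^{t(1-θ)}` the radius `R = (r^{θ(m-t)+t} / l)^{1/m}` lies in `[r^θ, |E|]`, and for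
levels above `l₁` the radius `R = r l^{-1/t}` lies in `[r, r^θ]`. In both ranges the Frostman
bound `μ(B(x, R)) ≤ c R^{t+ε}` is an integrable power of `l` (exponent `-(t+ε)/m > -1`, resp.
`-(t+ε)/t < -1`), and both integrals are `O(r^{t + θε})`. -/

/-- `kerPhi d r θ s t x` is `kerProfile r θ s t ‖x‖` by definition; the lemmas below about the
profile are applied to `kerPhi` through this definitional equality. -/
def kerProfile (r θ s t ρ : ℝ) : ℝ :=
  if ρ < r then 1 else if ρ ≤ r ^ θ then (r / ρ) ^ s else r ^ (θ * (t - s) + s) / ρ ^ t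

section KernelProfile

variable {r θ s t ρ : ℝ}

theorem kerProfile_of_lt (h : ρ < r) : kerProfile r θ s t ρ = 1 :=
  if_pos h

theorem kerProfile_of_le_of_le (hr : r ≤ ρ) (hρ : ρ ≤ r ^ θ) :
    kerProfile r θ s t ρ = (r / ρ) ^ s := by
  rw [kerProfile, if_neg hr.not_gt, if_pos hρ]

theorem kerProfile_of_rpow_le (hr0 : 0 < r) (hr1 : r ≤ 1) (hθ1 : θ ≤ 1) (hρ : r ^ θ ≤ ρ) :
    kerProfile r θ s t ρ = r ^ (θ * (t - s) + s) / ρ ^ t := by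
  have hrθ : r ≤ r ^ θ := Real.self_le_rpow_of_le_one hr0.le hr1 hθ1
  rw [kerProfile, if_neg (hrθ.trans hρ).not_gt]
  split_ifs with h
  · obtain rfl : ρ = r ^ θ := le_antisymm h hρ
    have hquot : r / r ^ θ = r ^ (1 - θ) := by rw [Real.rpow_sub hr0, Real.rpow_one]
    rw [hquot, ← Real.rpow_mul hr0.le, ← Real.rpow_mul hr0.le, ← Real.rpow_sub hr0]
    ring_nf
  · rfl

theorem kerProfile_nonneg (hr0 : 0 ≤ r) : 0 ≤ kerProfile r θ s t ρ := by
  unfold kerProfile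
  split_ifs with h1 h2
  · exact zero_le_one
  · exact Real.rpow_nonneg (div_nonneg hr0 (hr0.trans (not_lt.1 h1))) _
  · exact div_nonneg (Real.rpow_nonneg hr0 _) (Real.rpow_nonneg (hr0.trans (not_lt.1 h1)) _)

theorem measurable_kerProfile : Measurable (kerProfile r θ s t) := by
  unfold kerProfile
  refine Measurable.ite measurableSet_Iio measurable_const
    (Measurable.ite measurableSet_Iic ?_ ?_) <;> fun_prop

theorem antitone_kerProfile (hr0 : 0 < r) (hr1 : r ≤ 1) (hθ1 : θ ≤ 1) (hs : 0 ≤ s) (ht : 0 ≤ t) :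
    Antitone (kerProfile r θ s t) := by
  have hrθ : r ≤ r ^ θ := Real.self_le_rpow_of_le_one hr0.le hr1 hθ1
  have outer : ∀ a b, r ^ θ ≤ a → a ≤ b → kerProfile r θ s t b ≤ kerProfile r θ s t a := by
    intro a b ha hab
    have ha0 : 0 < a := (Real.rpow_pos_of_pos hr0 θ).trans_le ha
    rw [kerProfile_of_rpow_le hr0 hr1 hθ1 ha, kerProfile_of_rpow_le hr0 hr1 hθ1 (ha.trans hab)]
    gcongr
  have middle : ∀ a b, r ≤ a → a ≤ b → b ≤ r ^ θ →
      kerProfile r θ s t b ≤ kerProfile r θ s t a := by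
    intro a b ha hab hb
    rw [kerProfile_of_le_of_le ha (hab.trans hb), kerProfile_of_le_of_le (ha.trans hab) hb]
    have ha0 : 0 < a := hr0.trans_le ha
    have : 0 ≤ r / b := div_nonneg hr0.le (ha0.trans_le hab).le
    gcongr
  have beyond_r : ∀ a b, r ≤ a → a ≤ b → kerProfile r θ s t b ≤ kerProfile r θ s t a := by
    intro a b ha hab
    rcases le_total (r ^ θ) a with haθ | haθ
    · exact outer a b haθ hab
    rcases le_total b (r ^ θ) with hbθ | hbθ
    · exact middle a b ha hab hbθ
    · exact (outer _ b le_rfl hbθ).trans (middle a _ ha haθ le_rfl)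
  intro a b hab
  rcases le_or_gt r a with ha | ha
  · exact beyond_r a b ha hab
  rw [kerProfile_of_lt ha]
  rcases lt_or_ge b r with hb | hb
  · rw [kerProfile_of_lt hb]
  · calc kerProfile r θ s t b ≤ kerProfile r θ s t r := beyond_r r b le_rfl hb
      _ = 1 := by rw [kerProfile_of_le_of_le le_rfl hrθ, div_self hr0.ne', Real.one_rpow]

theorem kerProfile_le_one (hr0 : 0 < r) (hr1 : r ≤ 1) (hθ1 : θ ≤ 1) (hs : 0 ≤ s) (ht : 0 ≤ t) :
    kerProfile r θ s t ρ ≤ 1 :=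
  (antitone_kerProfile hr0 hr1 hθ1 hs ht (min_le_left ρ 0)).trans_eq
    (kerProfile_of_lt ((min_le_right ρ 0).trans_lt hr0))

@[fun_prop]
theorem measurable_kerPhi (d : ℕ) : Measurable (kerPhi d r θ s t) :=
  measurable_kerProfile.comp measurable_norm

end KernelProfile

theorem setOf_lt_comp_norm_sub_subset_ball {E : Type*} [SeminormedAddCommGroup E] {g : ℝ → ℝ}
    (hg : Antitone g) {l R : ℝ} (hR : g R ≤ l) (x : E) :
    {y | l < g ‖x - y‖} ⊆ ball x R := by
  intro y hy
  rw [mem_ball, dist_comm, dist_eq_norm]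
  by_contra! h
  exact (hg h |>.trans hR).not_gt hy

theorem lintegral_Ioc_zero_ofReal_mul_rpow {C a b : ℝ} (hC : 0 ≤ C) (ha : -1 < a) (hb : 0 ≤ b) :
    ∫⁻ l in Ioc 0 b, ENNReal.ofReal (C * l ^ a) = ENNReal.ofReal (C * (b ^ (a + 1) / (a + 1))) := by
  have hint : IntegrableOn (fun l : ℝ => C * l ^ a) (Ioc 0 b) :=
    ((intervalIntegrable_iff_integrableOn_Ioc_of_le hb).mp
      (intervalIntegral.intervalIntegrable_rpow' ha)).const_mul C
  rw [← ofReal_integral_eq_lintegral_ofReal hint (ae_restrict_of_forall_mem measurableSet_Ioc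
      fun l hl => mul_nonneg hC (Real.rpow_nonneg hl.1.le a)),
    ← intervalIntegral.integral_of_le hb, intervalIntegral.integral_const_mul,
    integral_rpow (Or.inl ha), Real.zero_rpow (by linarith), sub_zero]

theorem lintegral_Ioi_ofReal_mul_rpow {C a b : ℝ} (hC : 0 ≤ C) (ha : a < -1) (hb : 0 < b) :
    ∫⁻ l in Ioi b, ENNReal.ofReal (C * l ^ a) = ENNReal.ofReal (C * (-b ^ (a + 1) / (a + 1))) := by
  rw [← ofReal_integral_eq_lintegral_ofReal ((integrableOn_Ioi_rpow_of_lt ha hb).const_mul C)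
      (ae_restrict_of_forall_mem measurableSet_Ioi
        fun l hl => mul_nonneg hC (Real.rpow_nonneg (hb.trans hl).le a)),
    integral_const_mul, integral_Ioi_rpow_of_lt ha hb]

section SuperlevelSets

variable {d : ℕ} {μ : Measure (EuclideanSpace ℝ (Fin d))} {x : EuclideanSpace ℝ (Fin d)}
  {r θ s t q c D l : ℝ}

theorem measure_lt_kerPhi_le_of_rpow_le (hr0 : 0 < r) (hr1 : r ≤ 1) (hθ1 : θ ≤ 1) (hs : 0 < s)
    (ht : 0 ≤ t) (hfrost : ∀ u ∈ Icc r (r ^ θ), μ (ball x u) ≤ ENNReal.ofReal (c * u ^ q))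
    (hl : r ^ (s * (1 - θ)) ≤ l) :
    μ {y | l < kerPhi d r θ s t (x - y)} ≤ ENNReal.ofReal (c * r ^ q * l ^ (-(q / s))) := by
  have hl0 : 0 < l := (Real.rpow_pos_of_pos hr0 _).trans_le hl
  rcases lt_or_ge 1 l with hl1 | hl1
  · have hempty : {y | l < kerPhi d r θ s t (x - y)} = ∅ :=
      eq_empty_of_forall_notMem fun y hy =>
        (kerProfile_le_one hr0 hr1 hθ1 hs.le ht).not_gt (hl1.trans hy)
    simp [hempty]
  set R := r * l ^ (-s⁻¹) with hR
  have hRr : r ≤ R := le_mul_of_one_le_right hr0.le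
    (Real.one_le_rpow_of_pos_of_le_one_of_nonpos hl0 hl1 (by simp [hs.le]))
  have hRθ : R ≤ r ^ θ := by
    have hpow : l ^ (-s⁻¹) ≤ r ^ (θ - 1) := by
      calc l ^ (-s⁻¹) ≤ (r ^ (s * (1 - θ))) ^ (-s⁻¹) :=
            Real.rpow_le_rpow_of_nonpos (Real.rpow_pos_of_pos hr0 _) hl (by simp [hs.le])
        _ = r ^ (θ - 1) := by rw [← Real.rpow_mul hr0.le]; congr 1; field_simp; ring
    calc R ≤ r * r ^ (θ - 1) := mul_le_mul_of_nonneg_left hpow hr0.le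
      _ = r ^ θ := by rw [Real.rpow_sub hr0, Real.rpow_one, mul_div_cancel₀ _ hr0.ne']
  have hgR : kerProfile r θ s t R = l := by
    rw [kerProfile_of_le_of_le hRr hRθ, hR, div_mul_cancel_left₀ hr0.ne', ← Real.rpow_neg_one,
      ← Real.rpow_mul (Real.rpow_nonneg hl0.le _), ← Real.rpow_mul hl0.le]
    field_simp
    simp
  calc μ {y | l < kerPhi d r θ s t (x - y)}
      ≤ μ (ball x R) :=
        measure_mono (setOf_lt_comp_norm_sub_subset_ball
          (antitone_kerProfile hr0 hr1 hθ1 hs.le ht) hgR.le x)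
    _ ≤ ENNReal.ofReal (c * R ^ q) := hfrost R ⟨hRr, hRθ⟩
    _ = ENNReal.ofReal (c * r ^ q * l ^ (-(q / s))) := by
      rw [hR, Real.mul_rpow hr0.le (Real.rpow_nonneg hl0.le _), ← Real.rpow_mul hl0.le]
      ring_nf

theorem measure_lt_kerPhi_le_of_le_rpow (hr0 : 0 < r) (hr1 : r ≤ 1) (hθ1 : θ ≤ 1) (hs : 0 ≤ s)
    (ht : 0 < t) (hD : 0 < D)
    (hfrost : ∀ u ∈ Icc (r ^ θ) D, μ (ball x u) ≤ ENNReal.ofReal (c * u ^ q))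
    (hlD : r ^ (θ * (t - s) + s) / D ^ t ≤ l) (hl : l ≤ r ^ (s * (1 - θ))) :
    μ {y | l < kerPhi d r θ s t (x - y)} ≤
      ENNReal.ofReal (c * (r ^ (θ * (t - s) + s)) ^ (q / t) * l ^ (-(q / t))) := by
  set K := r ^ (θ * (t - s) + s) with hK
  have hK0 : 0 < K := Real.rpow_pos_of_pos hr0 _
  have hl0 : 0 < l := (div_pos hK0 (Real.rpow_pos_of_pos hD t)).trans_le hlD
  have hKl : 0 < K / l := div_pos hK0 hl0
  set R := (K / l) ^ t⁻¹ with hR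
  have hRθ : r ^ θ ≤ R := by
    have hlevel : r ^ (θ * t) ≤ K / l := by
      calc r ^ (θ * t) = K / r ^ (s * (1 - θ)) := by
            rw [hK, ← Real.rpow_sub hr0]; congr 1; ring
        _ ≤ K / l := div_le_div_of_nonneg_left hK0.le hl0 hl
    calc r ^ θ = (r ^ (θ * t)) ^ t⁻¹ := by
          rw [Real.rpow_mul hr0.le, Real.rpow_rpow_inv (Real.rpow_nonneg hr0.le _) ht.ne']
      _ ≤ R := Real.rpow_le_rpow (Real.rpow_nonneg hr0.le _) hlevel (inv_nonneg.2 ht.le)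
  have hRD : R ≤ D := by
    have hlevel : K / l ≤ D ^ t := by
      rwa [div_le_iff₀ hl0, mul_comm, ← div_le_iff₀ (Real.rpow_pos_of_pos hD t)]
    calc R ≤ (D ^ t) ^ t⁻¹ := Real.rpow_le_rpow hKl.le hlevel (inv_nonneg.2 ht.le)
      _ = D := Real.rpow_rpow_inv hD.le ht.ne'
  have hgR : kerProfile r θ s t R = l := by
    rw [kerProfile_of_rpow_le hr0 hr1 hθ1 hRθ, hR, Real.rpow_inv_rpow hKl.le ht.ne',
      div_div_cancel₀ hK0.ne']
  calc μ {y | l < kerPhi d r θ s t (x - y)}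
      ≤ μ (ball x R) :=
        measure_mono (setOf_lt_comp_norm_sub_subset_ball
          (antitone_kerProfile hr0 hr1 hθ1 hs ht.le) hgR.le x)
    _ ≤ ENNReal.ofReal (c * R ^ q) := hfrost R ⟨hRθ, hRD⟩
    _ = ENNReal.ofReal (c * K ^ (q / t) * l ^ (-(q / t))) := by
      rw [hR, ← Real.rpow_mul hKl.le, Real.div_rpow hK0.le hl0.le, Real.rpow_neg hl0.le,
        inv_mul_eq_div, div_eq_mul_inv, mul_assoc]


theorem setLIntegral_Ioi_measure_lt_kerPhi_le (hr0 : 0 < r) (hr1 : r ≤ 1) (hθ1 : θ ≤ 1)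
    (hs : 0 < s) (ht : 0 ≤ t) (hsq : s < q) (hc : 0 ≤ c)
    (hfrost : ∀ u ∈ Icc r (r ^ θ), μ (ball x u) ≤ ENNReal.ofReal (c * u ^ q)) :
    ∫⁻ l in Ioi (r ^ (s * (1 - θ))), μ {y | l < kerPhi d r θ s t (x - y)} ≤
      ENNReal.ofReal (c * s / (q - s) * r ^ (s + θ * (q - s))) := by
  have hexp : -(q / s) < -1 := by rw [neg_lt_neg_iff, one_lt_div hs]; exact hsq
  calc ∫⁻ l in Ioi (r ^ (s * (1 - θ))), μ {y | l < kerPhi d r θ s t (x - y)}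
      ≤ ∫⁻ l in Ioi (r ^ (s * (1 - θ))), ENNReal.ofReal (c * r ^ q * l ^ (-(q / s))) :=
        setLIntegral_mono (by fun_prop) fun l hl =>
          measure_lt_kerPhi_le_of_rpow_le hr0 hr1 hθ1 hs ht hfrost (le_of_lt hl)
    _ = ENNReal.ofReal (c * r ^ q *
          (-(r ^ (s * (1 - θ))) ^ (-(q / s) + 1) / (-(q / s) + 1))) :=
        lintegral_Ioi_ofReal_mul_rpow (by positivity) hexp (Real.rpow_pos_of_pos hr0 _)
    _ = ENNReal.ofReal (c * s / (q - s) * r ^ (s + θ * (q - s))) := by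
      have hpow : r ^ q * (r ^ (s * (1 - θ))) ^ (-(q / s) + 1) = r ^ (s + θ * (q - s)) := by
        rw [← Real.rpow_mul hr0.le, ← Real.rpow_add hr0]; congr 1; field_simp; ring
      have hden : -(q / s) + 1 = -((q - s) / s) := by field_simp; ring
      rw [← hpow, hden]
      congr 1
      field_simp [(sub_pos.2 hsq).ne']

theorem setLIntegral_Ioc_measure_lt_kerPhi_le (hr0 : 0 < r) (hr1 : r ≤ 1) (hθ1 : θ ≤ 1)
    (hs : 0 ≤ s) (ht : 0 < t) (hqt : q < t) (hc : 0 ≤ c) (hD : 0 < D)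
    (hfrost : ∀ u ∈ Icc (r ^ θ) D, μ (ball x u) ≤ ENNReal.ofReal (c * u ^ q)) :
    ∫⁻ l in Ioc (r ^ (θ * (t - s) + s) / D ^ t) (r ^ (s * (1 - θ))),
        μ {y | l < kerPhi d r θ s t (x - y)} ≤
      ENNReal.ofReal (c * t / (t - q) * r ^ (s + θ * (q - s))) := by
  set K := r ^ (θ * (t - s) + s) with hK
  have hexp : -1 < -(q / t) := by rw [neg_lt_neg_iff, div_lt_one ht]; exact hqt
  have hl0 : 0 < K / D ^ t := div_pos (Real.rpow_pos_of_pos hr0 _) (Real.rpow_pos_of_pos hD t)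
  calc ∫⁻ l in Ioc (K / D ^ t) (r ^ (s * (1 - θ))), μ {y | l < kerPhi d r θ s t (x - y)}
      ≤ ∫⁻ l in Ioc (K / D ^ t) (r ^ (s * (1 - θ))),
          ENNReal.ofReal (c * K ^ (q / t) * l ^ (-(q / t))) :=
        setLIntegral_mono (by fun_prop) fun l hl =>
          measure_lt_kerPhi_le_of_le_rpow hr0 hr1 hθ1 hs ht hD hfrost hl.1.le hl.2
    _ ≤ ∫⁻ l in Ioc 0 (r ^ (s * (1 - θ))), ENNReal.ofReal (c * K ^ (q / t) * l ^ (-(q / t))) :=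
        lintegral_mono_set (Ioc_subset_Ioc_left hl0.le)
    _ = ENNReal.ofReal (c * K ^ (q / t) *
          ((r ^ (s * (1 - θ))) ^ (-(q / t) + 1) / (-(q / t) + 1))) :=
        lintegral_Ioc_zero_ofReal_mul_rpow (by positivity) hexp (Real.rpow_nonneg hr0.le _)
    _ = ENNReal.ofReal (c * t / (t - q) * r ^ (s + θ * (q - s))) := by
      have hpow : K ^ (q / t) * (r ^ (s * (1 - θ))) ^ (-(q / t) + 1) = r ^ (s + θ * (q - s)) := by
        rw [hK, ← Real.rpow_mul hr0.le, ← Real.rpow_mul hr0.le, ← Real.rpow_add hr0]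
        congr 1; field_simp; ring
      have hden : -(q / t) + 1 = (t - q) / t := by field_simp; ring
      rw [← hpow, hden]
      congr 1
      field_simp [(sub_pos.2 hqt).ne']

end SuperlevelSets

theorem lintegral_kerPhi_sub_le {d : ℕ} (μ : Measure (EuclideanSpace ℝ (Fin d)))
    [IsProbabilityMeasure μ] (x : EuclideanSpace ℝ (Fin d)) {r θ s t q c D ρ : ℝ}
    (hr0 : 0 < r) (hr1 : r ≤ 1) (hθ0 : 0 ≤ θ) (hθ1 : θ ≤ 1) (hs : 0 < s) (hsq : s < q)
    (hqt : q < t) (hc : 0 ≤ c) (hD : 0 < D) (hθρ : r ^ θ ≤ ρ) (hDρ : D ≤ ρ)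
    (hfrost : ∀ u ∈ Icc r ρ, μ (ball x u) ≤ ENNReal.ofReal (c * u ^ q)) :
    ∫⁻ y, ENNReal.ofReal (kerPhi d r θ s t (x - y)) ∂μ ≤
      ENNReal.ofReal ((D ^ (-t) + c * t / (t - q) + c * s / (q - s)) * r ^ s) := by
  have ht : 0 < t := hs.trans (hsq.trans hqt)
  have hrθ : r ≤ r ^ θ := Real.self_le_rpow_of_le_one hr0.le hr1 hθ1
  set K := r ^ (θ * (t - s) + s)
  set l₀ := K / D ^ t
  set l₁ := r ^ (s * (1 - θ))
  rw [lintegral_eq_lintegral_meas_lt (f := fun y => kerPhi d r θ s t (x - y)) μ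
    (ae_of_all _ fun y => kerProfile_nonneg hr0.le) (by fun_prop)]
  have hcover : Ioi 0 ⊆ Ioc 0 l₀ ∪ Ioc l₀ l₁ ∪ Ioi l₁ := by
    intro l hl
    rcases le_or_gt l l₀ with h₀ | h₀
    · exact Or.inl (Or.inl ⟨hl, h₀⟩)
    rcases le_or_gt l l₁ with h₁ | h₁
    · exact Or.inl (Or.inr ⟨h₀, h₁⟩)
    · exact Or.inr h₁
  have hlow : ∫⁻ l in Ioc 0 l₀, μ {y | l < kerPhi d r θ s t (x - y)} ≤
      ENNReal.ofReal (D ^ (-t) * r ^ s) := by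
    have hKs : K ≤ r ^ s := Real.rpow_le_rpow_of_exponent_ge hr0 hr1
      (by nlinarith [mul_nonneg hθ0 (sub_nonneg.2 (hsq.trans hqt).le)])
    calc ∫⁻ l in Ioc 0 l₀, μ {y | l < kerPhi d r θ s t (x - y)}
        ≤ ∫⁻ _ in Ioc 0 l₀, 1 := setLIntegral_mono measurable_const fun _ _ => prob_le_one
      _ = ENNReal.ofReal l₀ := by rw [setLIntegral_one, Real.volume_Ioc, sub_zero]
      _ ≤ ENNReal.ofReal (D ^ (-t) * r ^ s) := by
        rw [Real.rpow_neg hD.le, inv_mul_eq_div]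
        exact ENNReal.ofReal_le_ofReal (div_le_div_of_nonneg_right hKs (Real.rpow_nonneg hD.le t))
  have hmid := setLIntegral_Ioc_measure_lt_kerPhi_le (x := x) (d := d) hr0 hr1 hθ1 hs.le ht hqt
    hc hD fun u hu => hfrost u ⟨hrθ.trans hu.1, hu.2.trans hDρ⟩
  have hhigh := setLIntegral_Ioi_measure_lt_kerPhi_le (x := x) (t := t) hr0 hr1 hθ1 hs ht.le hsq
    hc fun u hu => hfrost u ⟨hu.1, hu.2.trans hθρ⟩
  have hdecay : r ^ (s + θ * (q - s)) ≤ r ^ s := Real.rpow_le_rpow_of_exponent_ge hr0 hr1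
    (le_add_of_nonneg_right (mul_nonneg hθ0 (sub_nonneg.2 hsq.le)))
  calc ∫⁻ l in Ioi 0, μ {y | l < kerPhi d r θ s t (x - y)}
      ≤ ∫⁻ l in Ioc 0 l₀ ∪ Ioc l₀ l₁ ∪ Ioi l₁, μ {y | l < kerPhi d r θ s t (x - y)} :=
        lintegral_mono_set hcover
    _ ≤ ENNReal.ofReal (D ^ (-t) * r ^ s)
          + ENNReal.ofReal (c * t / (t - q) * r ^ (s + θ * (q - s)))
          + ENNReal.ofReal (c * s / (q - s) * r ^ (s + θ * (q - s))) :=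
        (lintegral_union_le _ _ _).trans
          (add_le_add ((lintegral_union_le _ _ _).trans (add_le_add hlow hmid)) hhigh)
    _ ≤ ENNReal.ofReal ((D ^ (-t) + c * t / (t - q) + c * s / (q - s)) * r ^ s) := by
      have hmid_coeff : 0 ≤ c * t / (t - q) := div_nonneg (by positivity) (sub_nonneg.2 hqt.le)
      have hhigh_coeff : 0 ≤ c * s / (q - s) := div_nonneg (by positivity) (sub_nonneg.2 hsq.le)
      rw [← ENNReal.ofReal_add (by positivity) (by positivity),
        ← ENNReal.ofReal_add (by positivity) (by positivity)]
      refine ENNReal.ofReal_le_ofReal ?_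
      nlinarith [mul_le_mul_of_nonneg_left hdecay hmid_coeff,
        mul_le_mul_of_nonneg_left hdecay hhigh_coeff]

theorem integral_integral_le_of_forall_lintegral_le {X : Type*} [MeasurableSpace X]
    {μ : Measure X} [IsProbabilityMeasure μ] {k : X → X → ℝ} {B : ℝ} (hB : 0 ≤ B)
    (hk_nonneg : ∀ x y, 0 ≤ k x y) (hk_meas : ∀ x, AEStronglyMeasurable (k x) μ)
    (hk : ∀ x, ∫⁻ y, ENNReal.ofReal (k x y) ∂μ ≤ ENNReal.ofReal B) :
    ∫ x, ∫ y, k x y ∂μ ∂μ ≤ B := by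
  have hinner : ∀ x, ‖∫ y, k x y ∂μ‖ ≤ B := fun x => by
    rw [Real.norm_of_nonneg (integral_nonneg (hk_nonneg x)),
      integral_eq_lintegral_of_nonneg_ae (ae_of_all _ (hk_nonneg x)) (hk_meas x)]
    exact ENNReal.toReal_le_of_le_ofReal hB (hk x)
  simpa using (le_abs_self _).trans (norm_integral_le_of_norm_le_const (ae_of_all μ hinner))

theorem kernel_energy_bound_general {d m : ℕ} (E : Set (EuclideanSpace ℝ (Fin d)))
    (hdiam0 : 0 < diam E)
    (t ε : ℝ) (ht : 0 < t) (hε : 0 < ε) (htε : t + ε < (m : ℝ))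
    (θ θ₁ r : ℝ) (hθ₁0 : 0 < θ₁) (hθ₁θ : θ₁ < θ) (hθ1 : θ < 1)
    (hr0 : 0 < r) (hr1 : r < 1) (hEr : diam E < r ^ θ₁)
    (μ : Measure (EuclideanSpace ℝ (Fin d))) (hμ : IsProbabilityMeasure μ)
    (c : ℝ) (hc : 0 < c)
    (hfrost : ∀ x : EuclideanSpace ℝ (Fin d), ∀ u ∈ Icc r (r ^ θ₁),
      μ (ball x u) ≤ ENNReal.ofReal (c * u ^ (t + ε))) :
    ∫ x, ∫ y, kerPhi d r θ t (m : ℝ) (x - y) ∂μ ∂μ ≤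
      (3 * max (c + c * t / ε)
        (diam E ^ (-(m : ℝ)) + c * (m : ℝ) / ((m : ℝ) - (t + ε)))) * r ^ t := by
  have hbound (x : EuclideanSpace ℝ (Fin d)) :
      ∫⁻ y, ENNReal.ofReal (kerPhi d r θ t m (x - y)) ∂μ ≤ ENNReal.ofReal
        ((diam E ^ (-(m : ℝ)) + c * m / (m - (t + ε)) + c * t / (t + ε - t)) * r ^ t) :=
    lintegral_kerPhi_sub_le μ x hr0 hr1.le (hθ₁0.trans hθ₁θ).le hθ1.le ht (by linarith) htε hc.le
      hdiam0 (Real.rpow_le_rpow_of_exponent_ge hr0 hr1.le hθ₁θ.le) hEr.le (hfrost x)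
  simp only [add_sub_cancel_left] at hbound
  have hdiam_pow : 0 ≤ diam E ^ (-(m : ℝ)) := Real.rpow_nonneg hdiam0.le _
  have hcoeff : 0 ≤ c * m / (m - (t + ε)) := div_nonneg (by positivity) (sub_nonneg.2 htε.le)
  have hrt : 0 < r ^ t := Real.rpow_pos_of_pos hr0 t
  refine (integral_integral_le_of_forall_lintegral_le (by positivity)
    (fun _ _ => kerProfile_nonneg hr0.le)
    (fun x => ((measurable_kerPhi d).comp (measurable_const_sub x)).aestronglyMeasurable)
    hbound).trans ?_
  nlinarith [le_max_left (c + c * t / ε) (diam E ^ (-(m : ℝ)) + c * m / (m - (t + ε))),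
    le_max_right (c + c * t / ε) (diam E ^ (-(m : ℝ)) + c * m / (m - (t + ε))),
    div_nonneg (mul_nonneg hc.le ht.le) hε.le]

/-- Kernel-energy estimate: under a Frostman-type condition on a probability
measure `μ` supported on `E`, the double integral of `φ_{r,θ}^{t,m}` is at most `C · r^t`. -/
theorem kernel_energy_bound {d m : ℕ} (E : Set (EuclideanSpace ℝ (Fin d)))
    (hE : E.Nonempty) (hEc : IsCompact E)
    (hdiam0 : 0 < diam E) (hdiam1 : diam E < 1)
    (hm1 : 1 ≤ m) (hmd : m ≤ d)
    (t ε : ℝ) (ht : 0 < t) (hε : 0 < ε) (htε : t + ε < (m : ℝ))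
    (θ θ₁ r : ℝ) (hθ₁0 : 0 < θ₁) (hθ₁θ : θ₁ < θ) (hθ1 : θ < 1)
    (hr0 : 0 < r) (hr1 : r < 1) (hEr : diam E < r ^ θ₁)
    (μ : Measure (EuclideanSpace ℝ (Fin d))) (hμ : IsProbabilityMeasure μ)
    (hμE : μ Eᶜ = 0)
    (c : ℝ) (hc : 0 < c)
    (hfrost : ∀ x : EuclideanSpace ℝ (Fin d), ∀ u ∈ Icc r (r ^ θ₁),
      μ (ball x u) ≤ ENNReal.ofReal (c * u ^ (t + ε))) :
    ∫ x, ∫ y, kerPhi d r θ t (m : ℝ) (x - y) ∂μ ∂μ ≤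
      (3 * max (c + c * t / ε)
        (diam E ^ (-(m : ℝ)) + c * (m : ℝ) / ((m : ℝ) - (t + ε)))) * r ^ t :=
  kernel_energy_bound_general E hdiam0 t ε ht hε htε θ θ₁ r hθ₁0 hθ₁θ hθ1 hr0 hr1 hEr μ hμ c hc
    hfrost
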